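/- arXiv:2203.01149 — 7 statements merged into one kernel-verified Lean document; each statement's English description precedes it below -/
import Mathlib

section
/- Let k₁, k₂, q, m₁, m₂ be positive integers such that m₁² + (k₂q)², m₂² + (k₁q)², and (k₁m₁)² + (k₂m₂)² are each perfect squares. Then (k₁m₁, k₂m₂, k₁k₂q) is an Euler brick, i.e. setting y = k₁m₁, x = k₂m₂, z = k₁k₂q, all of x² + y², y² + z², and x² + z² are perfect squares. -/
theorem euler_brick_construction (k₁ k₂ q m₁ m₂ : ℕ)
    (hk₁ : 0 < k₁) (hk₂ : 0 < k₂) (hq : 0 < q) (hm₁ : 0 < m₁) (hm₂ : 0 < m₂)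
    (h₁ : ∃ s : ℕ, m₁ ^ 2 + (k₂ * q) ^ 2 = s ^ 2)
    (h₂ : ∃ s : ℕ, m₂ ^ 2 + (k₁ * q) ^ 2 = s ^ 2)
    (h₃ : ∃ s : ℕ, (k₁ * m₁) ^ 2 + (k₂ * m₂) ^ 2 = s ^ 2) :
    (∃ s : ℕ, (k₂ * m₂) ^ 2 + (k₁ * m₁) ^ 2 = s ^ 2) ∧
    (∃ s : ℕ, (k₁ * m₁) ^ 2 + (k₁ * k₂ * q) ^ 2 = s ^ 2) ∧
    (∃ s : ℕ, (k₂ * m₂) ^ 2 + (k₁ * k₂ * q) ^ 2 = s ^ 2) := by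
  obtain ⟨s₁, hs₁⟩ := h₁
  obtain ⟨s₂, hs₂⟩ := h₂
  obtain ⟨s₃, hs₃⟩ := h₃
  refine ⟨⟨s₃, by linarith⟩, ⟨k₁ * s₁, ?_⟩, ⟨k₂ * s₂, ?_⟩⟩
  · calc (k₁ * m₁) ^ 2 + (k₁ * k₂ * q) ^ 2 = k₁ ^ 2 * (m₁ ^ 2 + (k₂ * q) ^ 2) := by ring
      _ = k₁ ^ 2 * s₁ ^ 2 := by rw [hs₁]
      _ = (k₁ * s₁) ^ 2 := by ring
  · calc (k₂ * m₂) ^ 2 + (k₁ * k₂ * q) ^ 2 = k₂ ^ 2 * (m₂ ^ 2 + (k₁ * q) ^ 2) := by ring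
      _ = k₂ ^ 2 * s₂ ^ 2 := by rw [hs₂]
      _ = (k₂ * s₂) ^ 2 := by ring
end

section
/- Let k₁, k₂, q, m₁, m₂ be positive integers such that m₁² + (k₂q)², m₂² + (k₁q)², and (k₁m₁)² + (k₂m₂)² are each perfect squares. Then the alternative triple (q·k₁m₁, q·k₂m₂, m₁m₂) is also an Euler brick: all three pairwise sums of squares of its entries are perfect squares. -/
theorem alternative_euler_brick_construction (k₁ k₂ q m₁ m₂ : ℕ)
    (hk₁ : 0 < k₁) (hk₂ : 0 < k₂) (hq : 0 < q) (hm₁ : 0 < m₁) (hm₂ : 0 < m₂)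
    (h₁ : ∃ s : ℕ, m₁ ^ 2 + (k₂ * q) ^ 2 = s ^ 2)
    (h₂ : ∃ s : ℕ, m₂ ^ 2 + (k₁ * q) ^ 2 = s ^ 2)
    (h₃ : ∃ s : ℕ, (k₁ * m₁) ^ 2 + (k₂ * m₂) ^ 2 = s ^ 2) :
    (∃ s : ℕ, (q * (k₁ * m₁)) ^ 2 + (q * (k₂ * m₂)) ^ 2 = s ^ 2) ∧
    (∃ s : ℕ, (q * (k₁ * m₁)) ^ 2 + (m₁ * m₂) ^ 2 = s ^ 2) ∧
    (∃ s : ℕ, (q * (k₂ * m₂)) ^ 2 + (m₁ * m₂) ^ 2 = s ^ 2) := by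
  obtain ⟨a, ha⟩ := h₁
  obtain ⟨b, hb⟩ := h₂
  obtain ⟨c, hc⟩ := h₃
  refine ⟨⟨q * c, ?_⟩, ⟨m₁ * b, ?_⟩, ⟨m₂ * a, ?_⟩⟩
  · rw [mul_pow q c, ← hc]; ring
  · rw [mul_pow m₁ b, ← hb]; ring
  · rw [mul_pow m₂ a, ← ha]; ring
end

section
/- Let r be a positive integer with y = (r+1)(2r−1) and x = r(2r+3), and suppose x² + y² is a perfect square. Then ((2r+1)y, (2r+1)x, 4r(r+1)) is an Euler brick: ((2r+1)y)² + ((2r+1)x)², ((2r+1)y)² + (4r(r+1))², and ((2r+1)x)² + (4r(r+1))² are all perfect squares. -/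
theorem parametric_family_euler_brick (r : ℕ) (hr : 0 < r)
    (hsq : ∃ s : ℕ, (r * (2 * r + 3)) ^ 2 + ((r + 1) * (2 * r - 1)) ^ 2 = s ^ 2) :
    (∃ s : ℕ, ((2 * r + 1) * ((r + 1) * (2 * r - 1))) ^ 2 +
        ((2 * r + 1) * (r * (2 * r + 3))) ^ 2 = s ^ 2) ∧
    (∃ s : ℕ, ((2 * r + 1) * ((r + 1) * (2 * r - 1))) ^ 2 +
        (4 * r * (r + 1)) ^ 2 = s ^ 2) ∧
    (∃ s : ℕ, ((2 * r + 1) * (r * (2 * r + 3))) ^ 2 +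
        (4 * r * (r + 1)) ^ 2 = s ^ 2) := by
  obtain ⟨m, rfl⟩ : ∃ m, r = m + 1 := ⟨r - 1, by omega⟩
  obtain ⟨s, hs⟩ := hsq
  have h1 : 2 * (m + 1) - 1 = 2 * m + 1 := by omega
  rw [h1] at hs ⊢
  refine ⟨⟨(2 * (m + 1) + 1) * s, ?_⟩,
    ⟨(m + 2) * (4 * (m + 1) ^ 2 + 1), by ring⟩,
    ⟨(m + 1) * (4 * (m + 1) ^ 2 + 8 * (m + 1) + 5), by ring⟩⟩
  have := hs
  nlinarith [hs]
end

section
/- For every positive integer r, (4(r+1)(2r−1))² + ((2r−1)(2r+1)(2r+3))² = ((2r−1)(4r²+8r+5))² and (4r(2r+3))² + ((2r−1)(2r+1)(2r+3))² = ((2r+3)(4r²+1))². Consequently, if in addition (r(2r+3))² + ((r+1)(2r−1))² is a perfect square, then (4(r+1)(2r−1), 4r(2r+3), (2r−1)(2r+1)(2r+3)) is an Euler brick. -/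
theorem alternative_parametric_family_euler_brick (r : ℕ) (hr : 0 < r) :
    (4 * ((r + 1) * (2 * r - 1))) ^ 2 + ((2 * r - 1) * (2 * r + 1) * (2 * r + 3)) ^ 2 =
      ((2 * r - 1) * (4 * r ^ 2 + 8 * r + 5)) ^ 2 ∧
    (4 * (r * (2 * r + 3))) ^ 2 + ((2 * r - 1) * (2 * r + 1) * (2 * r + 3)) ^ 2 =
      ((2 * r + 3) * (4 * r ^ 2 + 1)) ^ 2 ∧
    ((∃ s : ℕ, (r * (2 * r + 3)) ^ 2 + ((r + 1) * (2 * r - 1)) ^ 2 = s ^ 2) →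
      (∃ s : ℕ, (4 * ((r + 1) * (2 * r - 1))) ^ 2 + (4 * (r * (2 * r + 3))) ^ 2 = s ^ 2) ∧
      (∃ s : ℕ, (4 * ((r + 1) * (2 * r - 1))) ^ 2 +
          ((2 * r - 1) * (2 * r + 1) * (2 * r + 3)) ^ 2 = s ^ 2) ∧
      (∃ s : ℕ, (4 * (r * (2 * r + 3))) ^ 2 +
          ((2 * r - 1) * (2 * r + 1) * (2 * r + 3)) ^ 2 = s ^ 2)) := by
  obtain ⟨m, rfl⟩ := Nat.exists_eq_add_of_lt hr
  simp only [zero_add]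
  have h1 : 2 * (m + 1) - 1 = 2 * m + 1 := by omega
  rw [h1]
  refine ⟨by ring, by ring, ?_⟩
  rintro ⟨s, hs⟩
  refine ⟨⟨4 * s, ?_⟩, ⟨(2 * m + 1) * (4 * (m + 1) ^ 2 + 8 * (m + 1) + 5), by ring⟩,
    ⟨(2 * (m + 1) + 3) * (4 * (m + 1) ^ 2 + 1), by ring⟩⟩
  have : (4 * ((m + 1 + 1) * (2 * m + 1))) ^ 2 + (4 * ((m + 1) * (2 * (m + 1) + 3))) ^ 2 =
      16 * (((m + 1) * (2 * (m + 1) + 3)) ^ 2 + ((m + 1 + 1) * (2 * m + 1)) ^ 2) := by ring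
  rw [this, hs]; ring
end

section
/- Let x, y, z be positive integers such that x² + y², y² + z², and x² + z² are all perfect squares. Then at most one of x, y, z is odd. -/
lemma aux_two_odd (u v : ℕ) (hu : Odd u) (hv : Odd v) :
    ¬ ∃ a : ℕ, u ^ 2 + v ^ 2 = a ^ 2 := by
  rintro ⟨a, ha⟩
  obtain ⟨k, hk⟩ := hu
  obtain ⟨m, hm⟩ := hv
  rcases Nat.even_or_odd a with ⟨n, hn⟩ | ⟨n, hn⟩ <;> subst hk hm hn <;> ring_nf at ha <;> omega

theorem euler_brick_at_most_one_odd (x y z : ℕ)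
    (hx : 0 < x) (hy : 0 < y) (hz : 0 < z)
    (hxy : ∃ a : ℕ, x ^ 2 + y ^ 2 = a ^ 2)
    (hyz : ∃ b : ℕ, y ^ 2 + z ^ 2 = b ^ 2)
    (hxz : ∃ c : ℕ, x ^ 2 + z ^ 2 = c ^ 2) :
    ¬(Odd x ∧ Odd y) ∧ ¬(Odd y ∧ Odd z) ∧ ¬(Odd x ∧ Odd z) := by
  exact ⟨fun ⟨h1, h2⟩ => aux_two_odd x y h1 h2 hxy,
         fun ⟨h1, h2⟩ => aux_two_odd y z h1 h2 hyz,
         fun ⟨h1, h2⟩ => aux_two_odd x z h1 h2 hxz⟩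
end

section
/- For every positive integer y divisible by 4, the number of ordered pairs of positive integers (t, l) with l odd, gcd(t, l) = 1, and y = 2t(l+t) equals 2^{ω(y)−1}, where ω(y) is the number of distinct prime divisors of y. -/
open Finset

lemma prod_primeFactors_pow_factorization (n : ℕ) (hn : n ≠ 0) :
    ∏ p ∈ n.primeFactors, p ^ n.factorization p = n := by
  conv_rhs => rw [← Nat.factorization_prod_pow_eq_self hn]
  rfl

lemma unitary_split (n : ℕ) (hn : n ≠ 0) (S : Finset ℕ) (hS : S ⊆ n.primeFactors) :
    (∏ p ∈ S, p ^ n.factorization p) * (∏ p ∈ n.primeFactors \ S, p ^ n.factorization p) = n := by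
  rw [← Finset.prod_union Finset.disjoint_sdiff, Finset.union_sdiff_of_subset hS,
    prod_primeFactors_pow_factorization n hn]

lemma unitary_card (n : ℕ) (hn : n ≠ 0) :
    (n.divisors.filter fun d => Nat.Coprime d (n / d)).card = 2 ^ n.primeFactors.card := by
  rw [← Finset.card_powerset]
  refine Finset.card_bij' (fun d _ => d.primeFactors)
    (fun S _ => ∏ p ∈ S, p ^ n.factorization p) ?_ ?_ ?_ ?_
  · -- j maps: primeFactors of unitary divisor ⊆ primeFactors n
    intro d hd
    rw [Finset.mem_filter, Nat.mem_divisors] at hd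
    exact Finset.mem_powerset.2 (Nat.primeFactors_mono hd.1.1 hn)
  · -- i maps: prod is a unitary divisor
    intro S hS
    rw [Finset.mem_powerset] at hS
    have key := unitary_split n hn S hS
    have hpos : 0 < ∏ p ∈ S, p ^ n.factorization p := by
      apply Finset.prod_pos
      intro p hp
      exact pow_pos (Nat.Prime.pos (Nat.prime_of_mem_primeFactors (hS hp))) _
    have hdvd : (∏ p ∈ S, p ^ n.factorization p) ∣ n := ⟨_, key.symm⟩
    have hdiv : n / (∏ p ∈ S, p ^ n.factorization p)
        = ∏ p ∈ n.primeFactors \ S, p ^ n.factorization p :=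
      Nat.div_eq_of_eq_mul_right hpos key.symm
    rw [Finset.mem_filter, Nat.mem_divisors, hdiv]
    refine ⟨⟨hdvd, hn⟩, ?_⟩
    apply Nat.Coprime.prod_left
    intro p hp
    apply Nat.Coprime.prod_right
    intro q hq
    have hqS := Finset.mem_sdiff.1 hq
    exact Nat.Coprime.pow _ _ ((Nat.coprime_primes (Nat.prime_of_mem_primeFactors (hS hp))
      (Nat.prime_of_mem_primeFactors hqS.1)).2 (by rintro rfl; exact hqS.2 hp))
  · -- left_inv: d ↦ primeFactors d ↦ prod = d
    intro d hd
    rw [Finset.mem_filter, Nat.mem_divisors] at hd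
    obtain ⟨⟨hdvd, _⟩, hcop⟩ := hd
    have hd0 : d ≠ 0 := by rintro rfl; exact hn (Nat.zero_dvd.1 hdvd)
    conv_rhs => rw [← prod_primeFactors_pow_factorization d hd0]
    apply Finset.prod_congr rfl
    intro p hp
    congr 1
    have hple : d.factorization p ≤ n.factorization p :=
      (Nat.factorization_le_iff_dvd hd0 hn).2 hdvd p
    rcases lt_or_eq_of_le hple with hlt | heq
    · exfalso
      have hpd : p ∣ d := Nat.dvd_of_mem_primeFactors hp
      have hpnd : p ∣ n / d := by
        have : 0 < (n / d).factorization p := by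
          rw [Nat.factorization_div hdvd]
          simpa using Nat.sub_pos_of_lt hlt
        exact Nat.dvd_of_mem_primeFactors <| by
          rw [← Nat.support_factorization]
          exact Finsupp.mem_support_iff.2 this.ne'
      have h1 : p ∣ 1 := hcop ▸ Nat.dvd_gcd hpd hpnd
      exact (Nat.prime_of_mem_primeFactors hp).one_lt.ne' (Nat.dvd_one.1 h1)
    · exact heq.symm
  · -- right_inv : primeFactors (∏ p in S, p^vp) = S
    intro S hS
    rw [Finset.mem_powerset] at hS
    ext q
    simp only [Nat.mem_primeFactors]
    constructor
    · rintro ⟨hq, hqdvd, -⟩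
      obtain ⟨p, hpS, hqp⟩ := (Nat.Prime.prime hq).exists_mem_finset_dvd hqdvd
      have := (Nat.Prime.dvd_of_dvd_pow hq hqp)
      rwa [(Nat.prime_dvd_prime_iff_eq hq (Nat.prime_of_mem_primeFactors (hS hpS))).1 this]
    · intro hq
      have hqp := Nat.prime_of_mem_primeFactors (hS hq)
      refine ⟨hqp, ?_, ?_⟩
      · have hv : n.factorization q ≠ 0 :=
          Finsupp.mem_support_iff.1 (by rw [Nat.support_factorization]; exact hS hq)
        exact dvd_trans (dvd_pow_self q hv) (Finset.dvd_prod_of_mem _ hq)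
      · exact (Finset.prod_pos (fun p hp =>
          pow_pos (Nat.prime_of_mem_primeFactors (hS hp)).pos _)).ne'

lemma unitary_half (n : ℕ) (hn : 2 ≤ n) :
    2 * (n.divisors.filter fun d => Nat.Coprime d (n / d) ∧ d * d < n).card
      = 2 ^ n.primeFactors.card := by
  have hn0 : n ≠ 0 := by omega
  rw [← unitary_card n hn0]
  have hsplit := Finset.card_filter_add_card_filter_not
    (s := n.divisors.filter fun d => Nat.Coprime d (n / d)) (p := fun d => d * d < n)
  have hT : (n.divisors.filter fun d => Nat.Coprime d (n / d) ∧ d * d < n)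
      = (n.divisors.filter fun d => Nat.Coprime d (n / d)).filter (fun d => d * d < n) := by
    rw [Finset.filter_filter]
  -- key swap facts
  have hswap : ∀ d ∈ n.divisors, Nat.Coprime d (n / d) → (d * d < n ↔ ¬ (n / d) * (n / d) < n) := by
    intro d hd hcop
    have hdvd : d ∣ n := (Nat.mem_divisors.1 hd).1
    have hdpos : 0 < d := Nat.pos_of_mem_divisors hd
    have hmul : d * (n / d) = n := Nat.mul_div_cancel' hdvd
    have hqpos : 0 < n / d := Nat.div_pos (Nat.le_of_dvd (by omega) hdvd) hdpos
    constructor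
    · intro h
      have hlt : d < n / d := by
        by_contra hle
        push_neg at hle
        have := Nat.mul_le_mul_left d hle
        omega
      have : n < (n / d) * (n / d) := by
        calc n = d * (n / d) := hmul.symm
        _ < (n / d) * (n / d) := by
          exact Nat.mul_lt_mul_of_lt_of_le hlt (le_refl _) hqpos
      omega
    · intro h
      have hne : d ≠ n / d := by
        intro he
        have : Nat.gcd d d = 1 := by rw [← he] at hcop; exact hcop
        rw [Nat.gcd_self] at this
        subst this
        simp at hmul
        omega
      rcases lt_or_gt_of_ne hne with hlt | hgt
      · have := Nat.mul_lt_mul_of_lt_of_le hlt (le_refl d) hdpos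
        calc d * d < (n / d) * d := by
              exact Nat.mul_lt_mul_of_lt_of_le hlt (le_refl d) hdpos
        _ = n := by rw [Nat.mul_comm]; exact hmul
      · exfalso
        apply h
        calc (n / d) * (n / d) < d * (n / d) := Nat.mul_lt_mul_of_lt_of_le hgt (le_refl _) hqpos
        _ = n := hmul
  have hbij : ((n.divisors.filter fun d => Nat.Coprime d (n / d)).filter (fun d => d * d < n)).card
      = ((n.divisors.filter fun d => Nat.Coprime d (n / d)).filter (fun d => ¬ d * d < n)).card := by
    refine Finset.card_bij' (fun d _ => n / d) (fun d _ => n / d) ?_ ?_ ?_ ?_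
    · intro d hd
      simp only [Finset.mem_filter, Nat.mem_divisors] at hd ⊢
      obtain ⟨⟨⟨hdvd, -⟩, hcop⟩, hlt⟩ := hd
      have hqdvd : n / d ∣ n := Nat.div_dvd_of_dvd hdvd
      have hdd : n / (n / d) = d := Nat.div_div_self hdvd hn0
      refine ⟨⟨⟨hqdvd, hn0⟩, by rw [hdd]; exact hcop.symm⟩, ?_⟩
      have := (hswap d (Nat.mem_divisors.2 ⟨hdvd, hn0⟩) hcop).1 hlt
      exact this
    · intro d hd
      simp only [Finset.mem_filter, Nat.mem_divisors] at hd ⊢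
      obtain ⟨⟨⟨hdvd, -⟩, hcop⟩, hlt⟩ := hd
      have hqdvd : n / d ∣ n := Nat.div_dvd_of_dvd hdvd
      have hdd : n / (n / d) = d := Nat.div_div_self hdvd hn0
      refine ⟨⟨⟨hqdvd, hn0⟩, by rw [hdd]; exact hcop.symm⟩, ?_⟩
      have hiff := hswap (n/d) (Nat.mem_divisors.2 ⟨hqdvd, hn0⟩) (by rw [hdd]; exact hcop.symm)
      rw [hdd] at hiff
      exact hiff.2 (by simpa using hlt)
    · intro d hd
      simp only [Finset.mem_filter, Nat.mem_divisors] at hd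
      exact Nat.div_div_self hd.1.1.1 hn0
    · intro d hd
      simp only [Finset.mem_filter, Nat.mem_divisors] at hd
      exact Nat.div_div_self hd.1.1.1 hn0
  rw [hT, ← hsplit, hbij]
  ring

theorem count_representations_even_leg (y : ℕ) (hy : 0 < y) (h4 : 4 ∣ y) :
    Nat.card {p : ℕ × ℕ // 0 < p.1 ∧ 0 < p.2 ∧ Odd p.2 ∧
      Nat.gcd p.1 p.2 = 1 ∧ y = 2 * p.1 * (p.2 + p.1)} =
      2 ^ (y.primeFactors.card - 1) := by
  obtain ⟨m, rfl⟩ := h4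
  set n := 2 * m with hn
  have hm : 0 < m := by omega
  have hyn : 4 * m = 2 * n := by omega
  have hn2 : 2 ≤ n := by omega
  have hn0 : n ≠ 0 := by omega
  have h2n : 2 ∣ n := ⟨m, hn⟩
  -- prime factors of y equal prime factors of n
  have hpf : (4 * m).primeFactors = n.primeFactors := by
    rw [hyn, Nat.primeFactors_mul two_ne_zero hn0, Nat.Prime.primeFactors Nat.prime_two]
    exact Finset.union_eq_right.2 (Finset.singleton_subset_iff.2
      (Nat.mem_primeFactors.2 ⟨Nat.prime_two, h2n, hn0⟩))
  set T := n.divisors.filter (fun d => Nat.Coprime d (n / d) ∧ d * d < n) with hT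
  have e : {p : ℕ × ℕ // 0 < p.1 ∧ 0 < p.2 ∧ Odd p.2 ∧
      Nat.gcd p.1 p.2 = 1 ∧ 4 * m = 2 * p.1 * (p.2 + p.1)} ≃ {d : ℕ // d ∈ T} := by
    refine ⟨fun x => ⟨x.1.1, ?_⟩, fun d => ⟨(d.1, n / d.1 - d.1), ?_⟩, ?_, ?_⟩
    · obtain ⟨⟨t, l⟩, ht, hl, hlo, hg, hyeq⟩ := x
      simp only at ht hl hlo hg hyeq
      show t ∈ T
      have hneq : n = t * (l + t) := by
        have h2 : 2 * t * (l + t) = 2 * (t * (l + t)) := by ring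
        omega
      have hdvd : t ∣ n := ⟨l + t, hneq⟩
      have hdiv : n / t = l + t := by rw [hneq]; exact Nat.mul_div_cancel_left _ ht
      rw [hT, Finset.mem_filter, Nat.mem_divisors, hdiv]
      refine ⟨⟨hdvd, hn0⟩, ?_, ?_⟩
      · rw [Nat.Coprime, Nat.gcd_add_self_right]; exact hg
      · rw [hneq]
        exact mul_lt_mul_of_pos_left (by omega) ht
    · obtain ⟨d, hd⟩ := d
      rw [hT, Finset.mem_filter, Nat.mem_divisors] at hd
      obtain ⟨⟨hdvd, -⟩, hcop, hlt⟩ := hd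
      have hdpos : 0 < d := Nat.pos_of_dvd_of_pos hdvd (by omega)
      have hmul : d * (n / d) = n := Nat.mul_div_cancel' hdvd
      have hdlt : d < n / d := by
        by_contra hle
        push_neg at hle
        have := Nat.mul_le_mul_left d hle
        omega
      have hsub : n / d - d + d = n / d := Nat.sub_add_cancel hdlt.le
      refine ⟨hdpos, by simp only; omega, ?_, ?_, ?_⟩
      rotate_left 2
      · show 4 * m = 2 * d * (n / d - d + d)
        rw [hsub]
        have h2 : 2 * d * (n / d) = 2 * (d * (n / d)) := by ring
        omega
      · -- Odd (n / d - d)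
        simp only
        have h2dvd : 2 ∣ d * (n / d) := by omega
        rcases (Nat.prime_two.dvd_mul.1 h2dvd) with h2d | h2q
        · have hodd : Odd (n / d) := by
            rcases Nat.even_or_odd (n / d) with he | ho
            · exfalso
              have : (2 : ℕ) ∣ Nat.gcd d (n / d) := Nat.dvd_gcd h2d he.two_dvd
              rw [hcop] at this
              omega
            · exact ho
          exact Nat.Odd.sub_even hdlt.le hodd (even_iff_two_dvd.2 h2d)
        · have hodd : Odd d := by
            rcases Nat.even_or_odd d with he | ho
            · exfalso
              have : (2 : ℕ) ∣ Nat.gcd d (n / d) := Nat.dvd_gcd he.two_dvd h2q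
              rw [hcop] at this
              omega
            · exact ho
          exact Nat.Even.sub_odd hdlt.le (even_iff_two_dvd.2 h2q) hodd
      · simp only
        rw [Nat.gcd_sub_self_right hdlt.le]
        exact hcop
    · rintro ⟨⟨t, l⟩, ht, hl, hlo, hg, hyeq⟩
      simp only at ht hl hlo hg hyeq
      apply Subtype.ext
      simp only [Prod.mk.injEq]
      have hneq : n = t * (l + t) := by
        have h2 : 2 * t * (l + t) = 2 * (t * (l + t)) := by ring
        omega
      have hdiv : n / t = l + t := by rw [hneq]; exact Nat.mul_div_cancel_left _ ht
      exact ⟨by trivial, by omega⟩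
    · rintro ⟨d, hd⟩
      apply Subtype.ext
      rfl
  rw [Nat.card_congr e, Nat.card_eq_finsetCard, hpf]
  have hhalf := unitary_half n hn2
  rw [← hT] at hhalf
  have hk : 1 ≤ n.primeFactors.card := by
    refine Finset.card_pos.2 ⟨2, Nat.mem_primeFactors.2 ⟨Nat.prime_two, h2n, hn0⟩⟩
  have : 2 ^ n.primeFactors.card = 2 * 2 ^ (n.primeFactors.card - 1) := by
    rw [← pow_succ']
    congr 1
    omega
  rw [this] at hhalf
  omega
end

section
/- For every odd integer x > 1, the number of ordered pairs of positive integers (t, l) with l odd, gcd(t, l) = 1, and x = l(l+2t) equals 2^{ω(x)−1}, where ω(x) is the number of distinct prime divisors of x. -/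
/-! The map `(t, l) ↦ (l, l + 2t)` identifies the representations `x = l (l + 2t)` with the
factorizations `x = a b` into coprime factors `a < b`: as `x` is odd, `b - a` is even, and since `l`
is odd, `gcd (t, l) = 1` is equivalent to `gcd (l, l + 2t) = 1`. A coprime factorization `n = a b`
is determined by the set of primes dividing `a`, which can be any subset of the prime factors of
`n`, so there are `2 ^ ω(n)` of them; swapping the factors matches those with `a < b` with those
with `a > b`, and `a = b` forces `n = 1`. -/

open Finset

namespace Nat

def coprimeAntidiagonal (n : ℕ) : Finset (ℕ × ℕ) :=
  {ab ∈ n.divisorsAntidiagonal | Coprime ab.1 ab.2}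

@[simp]
lemma mem_coprimeAntidiagonal {n : ℕ} {ab : ℕ × ℕ} :
    ab ∈ n.coprimeAntidiagonal ↔ ab.1 * ab.2 = n ∧ n ≠ 0 ∧ Coprime ab.1 ab.2 := by
  simp [coprimeAntidiagonal, and_assoc]

lemma primeFactors_prod_pow {s : Finset ℕ} {e : ℕ → ℕ} (hs : ∀ p ∈ s, p.Prime ∧ e p ≠ 0) :
    (∏ p ∈ s, p ^ e p).primeFactors = s := by
  induction s using Finset.induction_on with
  | empty => simp
  | insert p s hp ih =>
    obtain ⟨hp_prime, hep⟩ := hs p (mem_insert_self p s)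
    have hs' : ∀ q ∈ s, q.Prime ∧ e q ≠ 0 := fun q hq => hs q (mem_insert_of_mem hq)
    have hprod : ∏ q ∈ s, q ^ e q ≠ 0 :=
      prod_ne_zero_iff.mpr fun q hq => pow_ne_zero _ (hs' q hq).1.ne_zero
    rw [prod_insert hp, primeFactors_mul (pow_ne_zero _ hp_prime.ne_zero) hprod,
      primeFactors_pow _ hep, hp_prime.primeFactors, ih hs', insert_eq]

lemma prod_primeFactors_pow_factorization_mul {a b : ℕ} (hab : Coprime a b) (ha : a ≠ 0) :
    ∏ p ∈ a.primeFactors, p ^ (a * b).factorization p = a := by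
  conv_rhs => rw [prod_primeFactors_pow_factorization ha]
  refine prod_congr rfl fun p hp => ?_
  rw [factorization_eq_of_coprime_left hab (mem_primeFactors_iff_mem_primeFactorsList.mp hp)]

lemma primeFactors_prod_pow_factorization {n : ℕ} {s : Finset ℕ} (hs : s ⊆ n.primeFactors) :
    (∏ p ∈ s, p ^ n.factorization p).primeFactors = s :=
  primeFactors_prod_pow fun p hp => ⟨prime_of_mem_primeFactors (hs hp),
    Finsupp.mem_support_iff.mp (by rw [support_factorization]; exact hs hp)⟩

lemma coprimeAntidiagonal_eq_image {n : ℕ} (hn : n ≠ 0) :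
    n.coprimeAntidiagonal = n.primeFactors.powerset.image fun s =>
      (∏ p ∈ s, p ^ n.factorization p, ∏ p ∈ n.primeFactors \ s, p ^ n.factorization p) := by
  ext ⟨a, b⟩
  simp only [mem_coprimeAntidiagonal, mem_image, mem_powerset, Prod.mk.injEq]
  constructor
  · rintro ⟨rfl, hn, hab⟩
    obtain ⟨ha, hb⟩ := mul_ne_zero_iff.mp hn
    refine ⟨a.primeFactors, primeFactors_mono (dvd_mul_right a b) hn,
      prod_primeFactors_pow_factorization_mul hab ha, ?_⟩
    rw [primeFactors_mul ha hb, union_sdiff_cancel_left hab.disjoint_primeFactors, mul_comm]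
    exact prod_primeFactors_pow_factorization_mul hab.symm hb
  · rintro ⟨s, hs, rfl, rfl⟩
    have hne : ∀ t ⊆ n.primeFactors, ∏ p ∈ t, p ^ n.factorization p ≠ 0 := fun t ht =>
      prod_ne_zero_iff.mpr fun p hp => pow_ne_zero _ (prime_of_mem_primeFactors (ht hp)).ne_zero
    refine ⟨?_, hn, ?_⟩
    · rw [mul_comm, prod_sdiff hs, ← prod_primeFactors_pow_factorization hn]
    · rw [← disjoint_primeFactors (hne s hs) (hne _ sdiff_subset),
        primeFactors_prod_pow_factorization hs, primeFactors_prod_pow_factorization sdiff_subset]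
      exact disjoint_sdiff

lemma card_coprimeAntidiagonal {n : ℕ} (hn : n ≠ 0) :
    #n.coprimeAntidiagonal = 2 ^ #n.primeFactors := by
  rw [coprimeAntidiagonal_eq_image hn, Finset.card_image_of_injOn, card_powerset]
  intro s hs t ht hst
  have := congrArg (fun ab => ab.1.primeFactors) hst
  simpa only [primeFactors_prod_pow_factorization (mem_powerset.mp hs),
    primeFactors_prod_pow_factorization (mem_powerset.mp ht)] using this

lemma swap_mem_coprimeAntidiagonal {n : ℕ} {ab : ℕ × ℕ} :
    ab.swap ∈ n.coprimeAntidiagonal ↔ ab ∈ n.coprimeAntidiagonal := by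
  simp only [coprimeAntidiagonal, mem_filter, swap_mem_divisorsAntidiagonal, Prod.fst_swap,
    Prod.snd_swap, coprime_comm]

lemma card_coprimeAntidiagonal_filter_lt {n : ℕ} (hn : 1 < n) :
    #{ab ∈ n.coprimeAntidiagonal | ab.1 < ab.2} = 2 ^ (#n.primeFactors - 1) := by
  have hoff_diag : ∀ ab ∈ n.coprimeAntidiagonal, ab.1 ≠ ab.2 := by
    rintro ⟨a, b⟩ hab (rfl : a = b)
    obtain ⟨rfl, -, haa⟩ := mem_coprimeAntidiagonal.mp hab
    rw [(coprime_self a).mp haa] at hn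
    exact lt_irrefl 1 hn
  have hswap : #{ab ∈ n.coprimeAntidiagonal | ¬ab.1 < ab.2} =
      #{ab ∈ n.coprimeAntidiagonal | ab.1 < ab.2} := by
    refine card_nbij' Prod.swap Prod.swap ?_ ?_ (fun _ _ => rfl) (fun _ _ => rfl) <;>
    · rintro ⟨a, b⟩ hab
      rw [mem_coe, mem_filter] at hab ⊢
      have := hoff_diag (a, b) hab.1
      exact ⟨swap_mem_coprimeAntidiagonal.mpr hab.1, by dsimp only [Prod.swap_prod_mk] at *; omega⟩
  have hsplit :=
    card_filter_add_card_filter_not (s := n.coprimeAntidiagonal) (fun ab => ab.1 < ab.2)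
  rw [hswap, card_coprimeAntidiagonal (by omega)] at hsplit
  obtain ⟨k, hk⟩ :=
    exists_eq_add_one_of_ne_zero (Finset.card_ne_zero.mpr (nonempty_primeFactors.mpr hn))
  rw [hk, pow_succ] at hsplit
  rw [hk, Nat.add_sub_cancel]
  omega

end Nat

lemma Odd.coprime_add_two_mul_iff {l : ℕ} (hl : Odd l) (t : ℕ) :
    Nat.Coprime l (l + 2 * t) ↔ Nat.Coprime t l := by
  rw [add_comm, Nat.coprime_add_self_right, Nat.coprime_mul_iff_right, Nat.coprime_comm (m := t),
    and_iff_right (Nat.coprime_two_right.mpr hl)]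

lemma bijOn_oddLeg_coprimeAntidiagonal {x : ℕ} (hx : Odd x) :
    Set.BijOn (fun p : ℕ × ℕ => (p.2, p.2 + 2 * p.1))
      {p | 0 < p.1 ∧ 0 < p.2 ∧ Odd p.2 ∧ Nat.gcd p.1 p.2 = 1 ∧ x = p.2 * (p.2 + 2 * p.1)}
      ↑{ab ∈ x.coprimeAntidiagonal | ab.1 < ab.2} := by
  refine ⟨?_, ?_, ?_⟩
  · rintro ⟨t, l⟩ ⟨ht, hl, hl_odd, htl, rfl⟩
    dsimp only
    rw [mem_coe, mem_filter, Nat.mem_coprimeAntidiagonal]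
    exact ⟨⟨rfl, by positivity, (hl_odd.coprime_add_two_mul_iff t).mpr htl⟩, by omega⟩
  · rintro ⟨t, l⟩ - ⟨t', l'⟩ - h
    simp only [Prod.mk.injEq] at h ⊢
    omega
  · rintro ⟨a, b⟩ hab
    rw [mem_coe, mem_filter, Nat.mem_coprimeAntidiagonal] at hab
    obtain ⟨⟨rfl, -, hab⟩, hlt⟩ := hab
    obtain ⟨ha, hb⟩ := Nat.odd_mul.mp hx
    obtain ⟨t, ht⟩ : Even (b - a) := Nat.Odd.sub_odd hb ha
    obtain rfl : b = a + 2 * t := by omega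
    exact ⟨(t, a), ⟨by omega, ha.pos, ha, (ha.coprime_add_two_mul_iff t).mp hab, rfl⟩, rfl⟩

theorem count_representations_odd_leg (x : ℕ) (hx : 1 < x) (hodd : Odd x) :
    Nat.card {p : ℕ × ℕ // 0 < p.1 ∧ 0 < p.2 ∧ Odd p.2 ∧
      Nat.gcd p.1 p.2 = 1 ∧ x = p.2 * (p.2 + 2 * p.1)} =
      2 ^ (x.primeFactors.card - 1) := by
  rw [← Nat.card_coprimeAntidiagonal_filter_lt hx, ← Nat.card_eq_finsetCard]
  exact Nat.card_congr ((bijOn_oddLeg_coprimeAntidiagonal hodd).equiv _)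
end
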